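/- arXiv:1906.06370 — 3 statements merged into one kernel-verified Lean document; each statement's English description precedes it below -/
import Mathlib

section
/- Extend the moment sequence to all integers by setting μ(m) = μ_m for m ≥ 0 and μ(m) = μ_{1−m}/c^{1−2m} for m < 0. Then for every natural number n, the Toeplitz determinant t_n = det( (μ(k−j))_{0 ≤ j,k ≤ n} ) satisfies t_n = (−b/c)^{binom(n+1,2)}, where binom(n+1,2) = n(n+1)/2. -/
open Polynomial Finset


/-- The Toeplitz transform of the bi-infinite extension of the LBP moments:
`t_n = det(μ(k-j))_{0≤j,k≤n} = (-b/c)^{C(n+1,2)}`. -/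
theorem lbp_toeplitz_transform
    (b c : ℝ) (hb : b ≠ 0) (hc : c ≠ 0)
    (P : ℕ → Polynomial ℝ)
    (hP0 : P 0 = 1)
    (hP1 : P 1 = Polynomial.X - Polynomial.C c)
    (hP : ∀ n, 2 ≤ n →
      P n = (Polynomial.X - Polynomial.C c) * P (n - 1)
            - Polynomial.C b * Polynomial.X * P (n - 2))
    (μ : ℕ → ℝ)
    (hμ : ∀ n, (∑ k ∈ Finset.range (n + 1), (P n).coeff k * μ k) =
      if n = 0 then 1 else 0)
    (μext : ℤ → ℝ)
    (hext_nonneg : ∀ m : ℕ, μext (m : ℤ) = μ m)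
    (hext_neg : ∀ m : ℤ, m < 0 → μext m = μ (1 - m).toNat / c ^ (1 - 2 * m))
    (n : ℕ) :
    Matrix.det (Matrix.of fun j k : Fin (n + 1) => μext ((k : ℤ) - (j : ℤ))) =
      (-b / c) ^ ((n + 1).choose 2) := by
  -- the rearranged recurrence
  have hP2 : ∀ m : ℕ, P (m + 2) =
      (Polynomial.X - Polynomial.C c) * P (m + 1) - Polynomial.C b * Polynomial.X * P m := by
    intro m
    have := hP (m + 2) (by omega)
    simpa using this
  -- degrees and monicity
  have hmono : ∀ m, (P m).Monic ∧ (P m).natDegree = m := by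
    have key : ∀ m, ((P m).Monic ∧ (P m).natDegree = m) ∧
        ((P (m+1)).Monic ∧ (P (m+1)).natDegree = m + 1) := by
      intro m
      induction m with
      | zero => exact ⟨⟨by rw [hP0]; exact monic_one, by rw [hP0]; simp⟩,
          ⟨by rw [hP1]; exact monic_X_sub_C c, by rw [hP1]; exact natDegree_X_sub_C c⟩⟩
      | succ m ih =>
        refine ⟨ih.2, ?_⟩
        obtain ⟨⟨hm1, hd1⟩, ⟨hm2, hd2⟩⟩ := ih
        have hA : ((Polynomial.X - Polynomial.C c) * P (m + 1)).Monic :=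
          (monic_X_sub_C c).mul hm2
        have hdA : ((Polynomial.X - Polynomial.C c) * P (m + 1)).natDegree = m + 2 := by
          rw [(monic_X_sub_C c).natDegree_mul hm2, natDegree_X_sub_C, hd2]; omega
        have hdB : (Polynomial.C b * Polynomial.X * P m).natDegree < m + 2 := by
          calc (Polynomial.C b * Polynomial.X * P m).natDegree
              ≤ (Polynomial.C b * Polynomial.X).natDegree + (P m).natDegree :=
                natDegree_mul_le
            _ ≤ 1 + m := by
                gcongr
                · exact (natDegree_C_mul_le b Polynomial.X).trans (by simp)
                · exact hd1.le
            _ < m + 2 := by omega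
        constructor
        · rw [hP2 m]
          apply Polynomial.Monic.sub_of_left hA
          rw [degree_eq_natDegree hA.ne_zero, hdA]
          calc (Polynomial.C b * Polynomial.X * P m).degree
              ≤ ((Polynomial.C b * Polynomial.X * P m).natDegree : WithBot ℕ) :=
                degree_le_natDegree
            _ < ((m + 2 : ℕ) : WithBot ℕ) := by exact_mod_cast hdB
        · rw [hP2 m]
          rw [natDegree_sub_eq_left_of_natDegree_lt (by rw [hdA]; exact hdB), hdA]
    exact fun m => (key m).1
  have hdeg : ∀ m, (P m).natDegree = m := fun m => (hmono m).2
  have hcoeff_zero : ∀ m k, m < k → (P m).coeff k = 0 := by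
    intro m k hk
    exact Polynomial.coeff_eq_zero_of_natDegree_lt (by rw [hdeg]; exact hk)
  have hlead : ∀ m, (P m).coeff m = 1 := by
    intro m
    have := (hmono m).1
    rw [Polynomial.Monic, Polynomial.leadingCoeff, hdeg] at this
    exact this
  -- coefficient recurrences
  have hc0 : ∀ m, (P (m + 2)).coeff 0 = -c * (P (m + 1)).coeff 0 := by
    intro m
    rw [hP2 m]
    simp [sub_mul, mul_assoc, coeff_sub, coeff_C_mul]
  have hcs : ∀ m k, (P (m + 2)).coeff (k + 1) =
      (P (m + 1)).coeff k - c * (P (m + 1)).coeff (k + 1) - b * (P m).coeff k := by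
    intro m k
    rw [hP2 m]
    simp [sub_mul, mul_assoc, coeff_sub, coeff_C_mul, coeff_X_mul]
  -- first moments
  have hμ0 : μ 0 = 1 := by
    have := hμ 0
    simp [hP0] at this
    exact this
  have hμ1 : μ 1 = c := by
    have := hμ 1
    rw [Finset.sum_range_succ, Finset.sum_range_one] at this
    simp [hP1, hμ0] at this
    linarith
  -- generic-range orthogonality
  have hLP : ∀ m N, m < N →
      (∑ k ∈ Finset.range N, (P m).coeff k * μ k) = if m = 0 then 1 else 0 := by
    intro m N hN
    rw [← hμ m]
    symm
    apply Finset.sum_subset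
    · intro x hx
      simp only [Finset.mem_range] at *
      omega
    · intro x _ hx
      simp only [Finset.mem_range, not_lt] at hx
      rw [hcoeff_zero m x (by omega), zero_mul]
  -- master coefficient-sum recurrence
  have hsum2 : ∀ (m : ℕ) (g : ℕ → ℝ),
      (∑ k ∈ Finset.range (m + 3), (P (m + 2)).coeff k * g k) =
      (∑ k ∈ Finset.range (m + 2), (P (m + 1)).coeff k * g (k + 1))
      - c * (∑ k ∈ Finset.range (m + 2), (P (m + 1)).coeff k * g k)
      - b * (∑ k ∈ Finset.range (m + 1), (P m).coeff k * g (k + 1)) := by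
    intro m g
    rw [Finset.sum_range_succ' (fun k => (P (m + 2)).coeff k * g k) (m + 2)]
    have h1 : ∀ k ∈ Finset.range (m + 2), (P (m + 2)).coeff (k + 1) * g (k + 1) =
        (P (m + 1)).coeff k * g (k + 1) - c * ((P (m + 1)).coeff (k + 1) * g (k + 1))
        - b * ((P m).coeff k * g (k + 1)) := by
      intro k _
      rw [hcs m k]; ring
    rw [Finset.sum_congr rfl h1]
    rw [Finset.sum_sub_distrib, Finset.sum_sub_distrib, ← Finset.mul_sum, ← Finset.mul_sum]
    rw [hc0 m]
    have h2 : (∑ k ∈ Finset.range (m + 2), (P (m + 1)).coeff k * g k) =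
        (∑ k ∈ Finset.range (m + 1), (P (m + 1)).coeff (k + 1) * g (k + 1))
        + (P (m + 1)).coeff 0 * g 0 :=
      Finset.sum_range_succ' (fun k => (P (m + 1)).coeff k * g k) (m + 1)
    have h3 : (∑ k ∈ Finset.range (m + 2), (P (m + 1)).coeff (k + 1) * g (k + 1)) =
        (∑ k ∈ Finset.range (m + 1), (P (m + 1)).coeff (k + 1) * g (k + 1)) := by
      rw [Finset.sum_range_succ, hcoeff_zero (m+1) (m+2) (by omega), zero_mul, add_zero]
    have h4 : (∑ k ∈ Finset.range (m + 2), (P m).coeff k * g (k + 1)) =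
        (∑ k ∈ Finset.range (m + 1), (P m).coeff k * g (k + 1)) := by
      rw [Finset.sum_range_succ, hcoeff_zero m (m+1) (by omega), zero_mul, add_zero]
    rw [h2, h3, h4]
    ring
  -- the e-functional: L(x * P m) = c * b ^ m
  have hE : ∀ m, (∑ k ∈ Finset.range (m + 1), (P m).coeff k * μ (k + 1)) = c * b ^ m := by
    intro m
    induction m with
    | zero => simp [hP0, hμ1]
    | succ m ih =>
      have h := hsum2 m μ
      rw [hLP (m + 2) (m + 3) (by omega), hLP (m + 1) (m + 2) (by omega)] at h
      simp only [if_neg (by omega : ¬ m + 2 = 0), if_neg (by omega : ¬ m + 1 = 0)] at h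
      rw [ih] at h
      have : (∑ k ∈ Finset.range (m + 2), (P (m + 1)).coeff k * μ (k + 1)) = b * (c * b ^ m) := by
        linarith
      rw [this]; ring
  -- constant-coefficient duality
  have hdual : ∀ m i j, i + j = m → (P m).coeff j * c ^ (2 * j) = (-c) ^ m * (P m).coeff i := by
    have hconst : ∀ m, (P m).coeff 0 = (-c) ^ m := by
      have key : ∀ m, (P m).coeff 0 = (-c) ^ m ∧ (P (m + 1)).coeff 0 = (-c) ^ (m + 1) := by
        intro m
        induction m with
        | zero => exact ⟨by simp [hP0], by simp [hP1]⟩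
        | succ m ih =>
          refine ⟨ih.2, ?_⟩
          rw [hc0 m, ih.2]; ring
      exact fun m => (key m).1
    have hsq : ∀ k : ℕ, (-c) ^ k * (-c) ^ k = c ^ (2 * k) := by
      intro k
      rw [← pow_add, ← two_mul, pow_mul, neg_sq, ← pow_mul]
    have key : ∀ m, (∀ i j, i + j = m → (P m).coeff j * c ^ (2 * j) = (-c) ^ m * (P m).coeff i)
        ∧ (∀ i j, i + j = m + 1 →
          (P (m + 1)).coeff j * c ^ (2 * j) = (-c) ^ (m + 1) * (P (m + 1)).coeff i) := by
      intro m
      induction m with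
      | zero =>
        constructor
        · intro i j hij
          obtain ⟨rfl, rfl⟩ : i = 0 ∧ j = 0 := by omega
          simp [hP0]
        · intro i j hij
          rcases (by omega : i = 0 ∧ j = 1 ∨ i = 1 ∧ j = 0) with ⟨rfl, rfl⟩ | ⟨rfl, rfl⟩ <;>
            simp [hP1] <;> ring
      | succ m ih =>
        refine ⟨ih.2, ?_⟩
        intro i j hij
        match i, j with
        | 0, j =>
          have hj : j = m + 2 := by omega
          subst hj
          rw [hlead (m + 2), hconst (m + 2), one_mul, hsq]
        | i, 0 =>
          have hi : i = m + 2 := by omega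
          subst hi
          simp [hlead (m + 2), hconst (m + 2)]
        | i + 1, j + 1 =>
          have e1 := ih.2 (i + 1) j (by omega)
          have e2 := ih.2 i (j + 1) (by omega)
          have e3 := ih.1 i j (by omega)
          rw [hcs m j, hcs m i]
          linear_combination (c ^ 2) * e1 - c * e2 - (b * c ^ 2) * e3
    exact fun m i j h => (key m).1 i j h
  -- μext facts
  have hrefl : ∀ t : ℕ, μext (-(t : ℤ)) = μ (t + 1) / c ^ (2 * t + 1) := by
    intro t
    rcases Nat.eq_zero_or_pos t with ht | ht
    · subst ht
      have h0 : μext ((0:ℕ):ℤ) = μ 0 := hext_nonneg 0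
      simp only [Nat.cast_zero, neg_zero] at h0 ⊢
      rw [h0, hμ0, hμ1, pow_one, div_self hc]
    · have h := hext_neg (-(t : ℤ)) (by omega)
      rw [h]
      have h1 : (1 - (-(t : ℤ))).toNat = t + 1 := by omega
      have h2 : (1 - 2 * (-(t : ℤ))) = ((2 * t + 1 : ℕ) : ℤ) := by push_cast; ring
      rw [h1, h2, zpow_natCast]
  -- S sums
  have hSgen : ∀ m (j : ℤ) N, m < N →
      (∑ k ∈ Finset.range N, (P m).coeff k * μext ((k : ℤ) - j)) =
      ∑ k ∈ Finset.range (m + 1), (P m).coeff k * μext ((k : ℤ) - j) := by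
    intro m j N hN
    symm
    apply Finset.sum_subset
    · intro x hx
      simp only [Finset.mem_range] at *
      omega
    · intro x _ hx
      simp only [Finset.mem_range, not_lt] at hx
      rw [hcoeff_zero m x (by omega), zero_mul]
  have hSrec : ∀ m (j : ℤ),
      (∑ k ∈ Finset.range (m + 3), (P (m + 2)).coeff k * μext ((k : ℤ) - j)) =
      (∑ k ∈ Finset.range (m + 2), (P (m + 1)).coeff k * μext ((k : ℤ) - (j - 1)))
      - c * (∑ k ∈ Finset.range (m + 2), (P (m + 1)).coeff k * μext ((k : ℤ) - j))
      - b * (∑ k ∈ Finset.range (m + 1), (P m).coeff k * μext ((k : ℤ) - (j - 1))) := by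
    intro m j
    have h := hsum2 m (fun k => μext ((k : ℤ) - j))
    rw [h]
    have e : ∀ (S : Finset ℕ), (∑ k ∈ S, (P (m + 1)).coeff k * μext (((k + 1 : ℕ) : ℤ) - j)) =
        ∑ k ∈ S, (P (m + 1)).coeff k * μext ((k : ℤ) - (j - 1)) := by
      intro S
      apply Finset.sum_congr rfl
      intro k _
      congr 1
      push_cast
      ring_nf
    have e2 : (∑ k ∈ Finset.range (m + 1), (P m).coeff k * μext (((k + 1 : ℕ) : ℤ) - j)) =
        ∑ k ∈ Finset.range (m + 1), (P m).coeff k * μext ((k : ℤ) - (j - 1)) := by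
      apply Finset.sum_congr rfl
      intro k _
      congr 1
      push_cast
      ring_nf
    rw [e, e2]
  have hS0 : ∀ m, 1 ≤ m →
      (∑ k ∈ Finset.range (m + 1), (P m).coeff k * μext ((k : ℤ) - 0)) = 0 := by
    intro m hm
    have := hμ m
    rw [if_neg (by omega)] at this
    rw [← this]
    apply Finset.sum_congr rfl
    intro k _
    rw [sub_zero, hext_nonneg k]
  have hSdiag : ∀ m : ℕ,
      (∑ k ∈ Finset.range (m + 1), (P m).coeff k * μext ((k : ℤ) - (m : ℤ))) =
      (-b / c) ^ m := by
    intro m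
    have hterm : ∀ k ∈ Finset.range (m + 1),
        (P m).coeff k * μext ((k : ℤ) - (m : ℤ)) =
        ((-c) ^ m / c ^ (2 * m + 1)) * ((P m).coeff (m - k) * μ (m - k + 1)) := by
      intro k hk
      rw [Finset.mem_range] at hk
      obtain ⟨t, ht⟩ : ∃ t, k + t = m := ⟨m - k, by omega⟩
      subst ht
      have h1 : ((k : ℤ) - ((k + t : ℕ) : ℤ)) = -(t : ℤ) := by push_cast; ring
      have h2 : k + t - k = t := by omega
      rw [h1, h2, hrefl t]
      have h3 := hdual (k + t) t k (by omega)
      field_simp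
      linear_combination (μ (t + 1) * c ^ (2 * t + 1)) * h3
    rw [Finset.sum_congr rfl hterm, ← Finset.mul_sum]
    have hrefl2 : (∑ k ∈ Finset.range (m + 1), (P m).coeff (m - k) * μ (m - k + 1)) =
        (∑ k ∈ Finset.range (m + 1), (P m).coeff k * μ (k + 1)) := by
      simpa using Finset.sum_range_reflect (fun i => (P m).coeff i * μ (i + 1)) (m + 1)
    rw [hrefl2, hE m]
    rw [div_pow, neg_pow b, neg_pow c]
    field_simp
    ring
  have hSoff : ∀ (m : ℕ) (j : ℤ), 0 ≤ j → j < (m : ℤ) →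
      (∑ k ∈ Finset.range (m + 1), (P m).coeff k * μext ((k : ℤ) - j)) = 0 := by
    have key : ∀ m : ℕ,
        (∀ j : ℤ, 0 ≤ j → j < (m : ℤ) →
          (∑ k ∈ Finset.range (m + 1), (P m).coeff k * μext ((k : ℤ) - j)) = 0) ∧
        (∀ j : ℤ, 0 ≤ j → j < ((m : ℤ) + 1) →
          (∑ k ∈ Finset.range (m + 2), (P (m + 1)).coeff k * μext ((k : ℤ) - j)) = 0) := by
      intro m
      induction m with
      | zero =>
        refine ⟨fun j h1 h2 => absurd h2 (by omega), fun j h1 h2 => ?_⟩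
        have hj : j = 0 := by omega
        subst hj
        exact hS0 1 le_rfl
      | succ m ih =>
        refine ⟨ih.2, ?_⟩
        intro j h1 h2
        rcases eq_or_lt_of_le h1 with hj0 | hj1
        · rw [← hj0]
          exact hS0 (m + 2) (by omega)
        · rw [hSrec m j]
          have t1 : (∑ k ∈ Finset.range (m + 2),
              (P (m + 1)).coeff k * μext ((k : ℤ) - (j - 1))) = 0 :=
            ih.2 (j - 1) (by omega) (by push_cast; omega)
          rcases eq_or_lt_of_le (show j - 1 ≤ (m : ℤ) by push_cast at h2 ⊢; omega) with t3 | t3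
          case inr =>
            have t3' : (∑ k ∈ Finset.range (m + 1),
                (P m).coeff k * μext ((k : ℤ) - (j - 1))) = 0 :=
              ih.1 (j - 1) (by omega) t3
            have t2 : (∑ k ∈ Finset.range (m + 2),
                (P (m + 1)).coeff k * μext ((k : ℤ) - j)) = 0 := by
              apply ih.2 j h1
              omega
            rw [t1, t2, t3']; ring
          case inl =>
            have hjm : j = (m : ℤ) + 1 := by omega
            have d2 : (∑ k ∈ Finset.range (m + 2), (P (m + 1)).coeff k * μext ((k : ℤ) - j)) =
                (-b / c) ^ (m + 1) := by
              rw [hjm]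
              have := hSdiag (m + 1)
              push_cast at this ⊢
              convert this using 2
            have d3 : (∑ k ∈ Finset.range (m + 1), (P m).coeff k * μext ((k : ℤ) - (j - 1))) =
                (-b / c) ^ m := by
              have hjm' : j - 1 = (m : ℤ) := by omega
              rw [hjm']
              exact hSdiag m
            rw [t1, d2, d3]
            have e : c * (-b / c) = -b := by field_simp
            linear_combination (-(-b / c) ^ m) * e
    intro m
    exact (key m).1
  -- assemble the determinant
  classical
  set A : Matrix (Fin (n + 1)) (Fin (n + 1)) ℝ :=
    Matrix.of fun j k : Fin (n + 1) => μext ((k : ℤ) - (j : ℤ)) with hA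
  set U : Matrix (Fin (n + 1)) (Fin (n + 1)) ℝ :=
    Matrix.of fun k m : Fin (n + 1) => (P (m : ℕ)).coeff (k : ℕ) with hU
  have hUtri : U.BlockTriangular id := by
    intro i j hij
    exact hcoeff_zero j i hij
  have hdetU : U.det = 1 := by
    rw [Matrix.det_of_upperTriangular hUtri]
    simp [hU, hlead]
  have hentry : ∀ j m : Fin (n + 1), (A * U) j m =
      ∑ k ∈ Finset.range ((m : ℕ) + 1), (P (m : ℕ)).coeff k * μext ((k : ℤ) - (j : ℤ)) := by
    intro j m
    rw [Matrix.mul_apply]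
    rw [← hSgen (m : ℕ) (j : ℤ) (n + 1) m.isLt]
    rw [← Fin.sum_univ_eq_sum_range
      (fun k => (P (m : ℕ)).coeff k * μext ((k : ℤ) - (j : ℤ))) (n + 1)]
    apply Finset.sum_congr rfl
    intro k _
    simp [hA, hU]
    ring
  have hABtri : (A * U).BlockTriangular OrderDual.toDual := by
    intro i j hij
    rw [hentry i j]
    exact hSoff (j : ℕ) (i : ℤ) (by positivity) (by exact_mod_cast hij)
  have hdet2 : (A * U).det = ∏ i : Fin (n + 1), (-b / c) ^ (i : ℕ) := by
    rw [Matrix.det_of_lowerTriangular _ hABtri]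
    apply Finset.prod_congr rfl
    intro i _
    rw [hentry i i, hSdiag (i : ℕ)]
  have hprod : (∏ i : Fin (n + 1), (-b / c) ^ (i : ℕ)) = (-b / c) ^ ((n + 1).choose 2) := by
    rw [Finset.prod_pow_eq_pow_sum]
    congr 1
    rw [Fin.sum_univ_eq_sum_range (fun i => i) (n + 1), Finset.sum_range_id, Nat.choose_two_right]
  rw [show A.det = A.det * U.det by rw [hdetU, mul_one], ← Matrix.det_mul, hdet2, hprod]
end

section
/- For every natural number n ≥ 1, P_n(x) = ∑_{k=0}^{n} binom(n−1, n−k) · b^{n−k} · Q_k(x) in ℝ[x] (the term k = 0 vanishes since binom(n−1,n) = 0). -/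
/-!
Write `E` for the shift `u ↦ (u (i + 1))ᵢ` and `F = E + b`. The recurrence of `Q` from index `1`
on, `E² - (X - 2b - c) E + b (b + c)`, becomes `F² - (X - c) F + b X` after substituting
`E = F - b`, which is the recurrence of `P`. Hence the binomial transform
`m ↦ (Fᵐ u)₀ = ∑ C(m, i) bⁱ u_{m-i}` of `u_k = Q_{k+1}` satisfies the recurrence of `P`, and it
has the initial values `P_1, P_2`.
-/

open Polynomial Finset

theorem eq_of_twoStepRecurrence {α : Type*} {f g : ℕ → α} (step : ℕ → α → α → α)
    (h0 : f 0 = g 0) (h1 : f 1 = g 1)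
    (hf : ∀ n, f (n + 2) = step n (f n) (f (n + 1)))
    (hg : ∀ n, g (n + 2) = step n (g n) (g (n + 1))) : f = g := by
  funext n
  induction n using Nat.twoStepInduction with
  | zero => exact h0
  | one => exact h1
  | more n ih ih' => rw [hf, hg, ih, ih']

section BinomialTransform

variable {R : Type*}

def binomialTransform [CommSemiring R] (b : R) (u : ℕ → R) (m : ℕ) : R :=
  ∑ ij ∈ antidiagonal m, (m.choose ij.1 : R) * b ^ ij.1 * u ij.2

theorem binomialTransform_eq_sum_range [CommSemiring R] (b : R) (u : ℕ → R) (m : ℕ) :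
    binomialTransform b u m =
      ∑ k ∈ range (m + 1), (m.choose (m - k) : R) * b ^ (m - k) * u k := by
  rw [binomialTransform, ← Nat.sum_antidiagonal_swap]
  exact Nat.sum_antidiagonal_eq_sum_range_succ (fun j i => (m.choose i : R) * b ^ i * u j) m

@[simp]
theorem binomialTransform_zero [CommSemiring R] (b : R) (u : ℕ → R) :
    binomialTransform b u 0 = u 0 := by
  simp [binomialTransform]

theorem binomialTransform_succ [CommSemiring R] (b : R) (u : ℕ → R) (m : ℕ) :
    binomialTransform b u (m + 1) =
      binomialTransform b (fun i => u (i + 1)) m + b * binomialTransform b u m := by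
  simp only [binomialTransform, mul_assoc]
  rw [sum_antidiagonal_choose_succ_mul (fun i j => b ^ i * u j), mul_sum]
  congr 1
  refine sum_congr rfl fun ij hij => ?_
  rw [Nat.choose_symm_of_eq_add (mem_antidiagonal.mp hij).symm]
  ring

theorem binomialTransform_mul_sub_mul [CommRing R] (b s p : R) (v w : ℕ → R) (m : ℕ) :
    binomialTransform b (fun i => s * v i - p * w i) m =
      s * binomialTransform b v m - p * binomialTransform b w m := by
  simp only [binomialTransform, mul_sum, ← sum_sub_distrib]
  exact sum_congr rfl fun _ _ => by ring

theorem binomialTransform_recurrence [CommRing R] {u : ℕ → R} {s p : R} (b : R)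
    (hu : ∀ i, u (i + 2) = s * u (i + 1) - p * u i) (m : ℕ) :
    binomialTransform b u (m + 2) =
      (s + 2 * b) * binomialTransform b u (m + 1) -
        (b ^ 2 + b * s + p) * binomialTransform b u m := by
  have hshift : binomialTransform b (fun i => u (i + 1 + 1)) m =
      s * binomialTransform b (fun i => u (i + 1)) m - p * binomialTransform b u m := by
    simp only [hu]
    exact binomialTransform_mul_sub_mul b s p _ u m
  have h₀ := binomialTransform_succ b u (m + 1)
  have h₁ := binomialTransform_succ b (fun i => u (i + 1)) m
  have h₂ := binomialTransform_succ b u m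
  linear_combination h₀ + h₁ + hshift - (s + b) * h₂

end BinomialTransform

theorem lbp_in_terms_of_orth_general
    (b c : ℝ)
    (P : ℕ → Polynomial ℝ)
    (hP0 : P 0 = 1)
    (hP1 : P 1 = Polynomial.X - Polynomial.C c)
    (hP : ∀ n, 2 ≤ n →
      P n = (Polynomial.X - Polynomial.C c) * P (n - 1)
            - Polynomial.C b * Polynomial.X * P (n - 2))
    (Q : ℕ → Polynomial ℝ)
    (hQ1 : Q 1 = Polynomial.X - Polynomial.C c)
    (hQ2 : Q 2 = Polynomial.X ^ 2 - Polynomial.C (2 * (b + c)) * Polynomial.X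
                   + Polynomial.C (c * (b + c)))
    (hQ : ∀ n, 3 ≤ n →
      Q n = (Polynomial.X - Polynomial.C (2 * b + c)) * Q (n - 1)
            - Polynomial.C (b * (b + c)) * Q (n - 2)) :
    ∀ n, 1 ≤ n →
      P n = ∑ k ∈ Finset.range (n + 1),
        Polynomial.C (((n - 1).choose (n - k) : ℝ) * b ^ (n - k)) * Q k := by
  have hQ_shift : ∀ i, Q (i + 1 + 2) =
      (X - C (2 * b + c)) * Q (i + 1 + 1) - C (b * (b + c)) * Q (i + 1) := fun i =>
    hQ (i + 3) (by omega)
  have hP_eq : (fun m => P (m + 1)) = binomialTransform (C b) (fun k => Q (k + 1)) := by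
    refine eq_of_twoStepRecurrence (fun _ x y => (X - C c) * y - C b * X * x) ?_ ?_
      (fun n => hP (n + 3) (by omega)) fun n => ?_
    · rw [zero_add, binomialTransform_zero, hP1, hQ1]
    · have hP2 : P 2 = (X - C c) * P 1 - C b * X * P 0 := hP 2 le_rfl
      show P 2 = binomialTransform _ _ (0 + 1)
      rw [hP2, binomialTransform_succ, binomialTransform_zero, binomialTransform_zero,
        hP0, hP1, hQ1, hQ2]
      simp only [map_mul, map_add, map_ofNat]
      ring
    · rw [binomialTransform_recurrence (C b) hQ_shift n]
      simp only [map_mul, map_add, map_ofNat]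
      ring
  rintro n hn
  obtain ⟨m, rfl⟩ := Nat.exists_eq_add_of_le' hn
  rw [congrFun hP_eq m, binomialTransform_eq_sum_range, sum_range_succ' _ (m + 1)]
  simp [Nat.choose_succ_self]

/-- For `n ≥ 1`, `P_n(x) = ∑_{k=0}^n C(n-1, n-k) b^{n-k} Q_k(x)`. -/
theorem lbp_in_terms_of_orth
    (b c : ℝ) (hb : b ≠ 0) (hc : c ≠ 0)
    (P : ℕ → Polynomial ℝ)
    (hP0 : P 0 = 1)
    (hP1 : P 1 = Polynomial.X - Polynomial.C c)
    (hP : ∀ n, 2 ≤ n →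
      P n = (Polynomial.X - Polynomial.C c) * P (n - 1)
            - Polynomial.C b * Polynomial.X * P (n - 2))
    (Q : ℕ → Polynomial ℝ)
    (hQ0 : Q 0 = 1)
    (hQ1 : Q 1 = Polynomial.X - Polynomial.C c)
    (hQ2 : Q 2 = Polynomial.X ^ 2 - Polynomial.C (2 * (b + c)) * Polynomial.X
                   + Polynomial.C (c * (b + c)))
    (hQ : ∀ n, 3 ≤ n →
      Q n = (Polynomial.X - Polynomial.C (2 * b + c)) * Q (n - 1)
            - Polynomial.C (b * (b + c)) * Q (n - 2)) :
    ∀ n, 1 ≤ n →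
      P n = ∑ k ∈ Finset.range (n + 1),
        Polynomial.C (((n - 1).choose (n - k) : ℝ) * b ^ (n - k)) * Q k :=
  lbp_in_terms_of_orth_general b c P hP0 hP1 hP Q hQ1 hQ2 hQ
end

section
/- For every natural number n, ∑_{k=0}^{n} binom(2n−k, k)·C_{n−k} = ∑_{k=0}^{n} binom(n+k, 2k)·C_k; this common value is the n-th large Schroeder number S_n. -/
open Finset

lemma hockey (r : ℕ) : ∀ n : ℕ, ∑ i ∈ range n, i.choose r = n.choose (r+1) := by
  intro n
  induction n with
  | zero => simp
  | succ n ih => rw [sum_range_succ, ih, Nat.choose_succ_succ' n r]; ring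

lemma vander (s : ℕ) : ∀ r n : ℕ,
    ∑ i ∈ range (n+1), i.choose r * (n-i).choose s = (n+1).choose (r+s+1) := by
  intro r
  induction r with
  | zero =>
    intro n
    simp only [Nat.choose_zero_right, one_mul]
    rw [← sum_range_reflect]
    have : ∀ i ∈ range (n+1), (n - (n + 1 - 1 - i)).choose s = i.choose s := by
      intro i hi
      simp only [mem_range] at hi
      congr 1
      omega
    rw [sum_congr rfl this, hockey, zero_add]
  | succ r ihr =>
    intro n
    induction n with
    | zero => simp [Nat.choose_eq_zero_of_lt (show 1 < r+1+s+1 by omega)]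
    | succ n ihn =>
      rw [sum_range_succ' _ (n+1)]
      simp only [Nat.choose_zero_right, Nat.zero_le, Nat.choose_succ_succ]
      have : ∀ i ∈ range (n+1),
          (i.choose r + i.choose (r+1)) * (n + 1 - (i+1)).choose s
          = i.choose r * (n-i).choose s + i.choose (r+1) * (n-i).choose s := by
        intro i hi
        have : n + 1 - (i+1) = n - i := by omega
        rw [this, add_mul]
      rw [sum_congr rfl this, sum_add_distrib, ihr n, ihn]
      have h0 : Nat.choose 0 (r+1) = 0 := Nat.choose_eq_zero_of_lt (by omega)
      have e : r + 1 + s + 1 = r + s + 1 + 1 := by ring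
      rw [h0, zero_mul, add_zero, e, show r+1+s = r+s+1 from by ring,
        Nat.choose_succ_succ' n (r+s+1)]

lemma vander' (a b n : ℕ) :
    ∑ i ∈ range (n+1), (i+a).choose (2*a) * ((n-i)+b).choose (2*b)
      = (n+a+b+1).choose (2*(a+b)+1) := by
  have h := vander (2*b) (2*a) (n+a+b)
  rw [show 2*(a+b)+1 = 2*a+2*b+1 from by ring, ← h]
  have hsub : Ico a (a+n+1) ⊆ range (n+a+b+1) := by
    intro x hx
    simp only [mem_Ico] at hx
    simp only [mem_range]
    omega
  have hzero : ∀ x ∈ range (n+a+b+1), x ∉ Ico a (a+n+1) →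
      x.choose (2*a) * (n+a+b-x).choose (2*b) = 0 := by
    intro x hx hnx
    simp only [mem_range] at hx
    simp only [mem_Ico, not_and, not_lt] at hnx
    rcases lt_or_ge x a with hlt | hge
    · rw [Nat.choose_eq_zero_of_lt (by omega), zero_mul]
    · have : a + n + 1 ≤ x := hnx hge
      rw [Nat.choose_eq_zero_of_lt (n := n+a+b-x) (by omega), mul_zero]
  rw [← Finset.sum_subset hsub hzero, sum_Ico_eq_sum_range]
  have : a + n + 1 - a = n + 1 := by omega
  rw [this]
  refine sum_congr rfl ?_
  intro i hi
  simp only [mem_range] at hi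
  rw [Nat.add_comm a i]
  congr 2
  omega

def T (n : ℕ) : ℕ := ∑ k ∈ range (n+1), (n+k).choose (2*k) * catalan k

lemma Text {N i : ℕ} (h : i ≤ N) :
    T i = ∑ a ∈ range (N+1), (i+a).choose (2*a) * catalan a := by
  unfold T
  refine Finset.sum_subset ?_ ?_
  · intro x hx; simp only [mem_range] at *; omega
  · intro a ha hna
    simp only [mem_range] at ha hna
    rw [Nat.choose_eq_zero_of_lt (by omega), zero_mul]

lemma tri (m : ℕ) (F : ℕ → ℕ → ℕ) (hF : ∀ a b, m < a + b → F a b = 0) :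
    ∑ a ∈ range (m+1), ∑ b ∈ range (m+1), F a b
      = ∑ k ∈ range (m+1), ∑ a ∈ range (k+1), F a (k - a) := by
  rw [← Finset.sum_product', Finset.sum_sigma']
  have hsq : ∑ p ∈ (range (m+1) ×ˢ range (m+1)), F p.1 p.2
      = ∑ p ∈ (range (m+1) ×ˢ range (m+1)).filter (fun p => p.1 + p.2 ≤ m),
          F p.1 p.2 := by
    symm
    refine Finset.sum_filter_of_ne ?_
    intro p hp hne
    by_contra h
    exact hne (hF _ _ (by omega))
  rw [hsq]
  symm
  refine Finset.sum_nbij' (fun x => (x.2, x.1 - x.2)) (fun p => ⟨p.1 + p.2, p.1⟩)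
    ?_ ?_ ?_ ?_ ?_
  · intro x hx
    simp only [mem_sigma, mem_range] at hx
    simp only [mem_filter, mem_product, mem_range]
    omega
  · intro p hp
    simp only [mem_filter, mem_product, mem_range] at hp
    simp only [mem_sigma, mem_range]
    omega
  · intro x hx
    simp only [mem_sigma, mem_range] at hx
    ext <;> simp <;> omega
  · intro p hp
    simp
  · intro x hx
    simp only [mem_sigma, mem_range] at hx
    rfl

lemma key (m : ℕ) : T (m+1) = T m + ∑ i ∈ range (m+1), T i * T (m - i) := by
  -- Step 1: T (m+1) = T m + Δ
  have step1 : T (m+1) = T m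
      + ∑ k ∈ range (m+1), (m+k+1).choose (2*k+1) * catalan (k+1) := by
    have hTm : T m = ∑ j ∈ range (m+1), (m+(j+1)).choose (2*(j+1)) * catalan (j+1) + 1 := by
      have : T m = ∑ k ∈ range (m+2), (m+k).choose (2*k) * catalan k := by
        rw [T, sum_range_succ _ (m+1)]
        rw [Nat.choose_eq_zero_of_lt (by omega), zero_mul, add_zero]
      rw [this, sum_range_succ' _ (m+1)]
      simp
    rw [T, sum_range_succ' _ (m+1), hTm]
    simp only [Nat.mul_zero, Nat.add_zero, Nat.choose_zero_right, catalan_zero, mul_one, one_mul]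
    have : ∀ j ∈ range (m+1),
        (m+1+(j+1)).choose (2*(j+1)) * catalan (j+1)
          = (m+j+1).choose (2*j+1) * catalan (j+1)
            + (m+(j+1)).choose (2*(j+1)) * catalan (j+1) := by
      intro j hj
      have e1 : m+1+(j+1) = (m+j+1)+1 := by ring
      have e2 : 2*(j+1) = (2*j+1)+1 := by ring
      rw [e1, e2, Nat.choose_succ_succ' (m+j+1) (2*j+1), add_mul]
      congr 2 <;> omega
    rw [sum_congr rfl this, sum_add_distrib]
    ring
  -- Step 2: the convolution equals Δ
  have step2 : ∑ i ∈ range (m+1), T i * T (m - i)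
      = ∑ k ∈ range (m+1), (m+k+1).choose (2*k+1) * catalan (k+1) := by
    have hconv : ∑ i ∈ range (m+1), T i * T (m - i)
        = ∑ a ∈ range (m+1), ∑ b ∈ range (m+1),
            (catalan a * catalan b) * (m+(a+b)+1).choose (2*(a+b)+1) := by
      have : ∀ i ∈ range (m+1), T i * T (m-i)
          = ∑ a ∈ range (m+1), ∑ b ∈ range (m+1),
              ((i+a).choose (2*a) * ((m-i)+b).choose (2*b))
                * (catalan a * catalan b) := by
        intro i hi
        simp only [mem_range] at hi
        rw [Text (show i ≤ m by omega), Text (show m - i ≤ m by omega),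
          Finset.sum_mul_sum]
        refine sum_congr rfl fun a _ => sum_congr rfl fun b _ => ?_
        ring
      rw [sum_congr rfl this, Finset.sum_comm]
      refine sum_congr rfl fun a _ => ?_
      rw [Finset.sum_comm]
      refine sum_congr rfl fun b _ => ?_
      rw [← Finset.sum_mul, vander' a b m]
      ring
    rw [hconv]
    rw [tri m (fun a b => (catalan a * catalan b) * (m+(a+b)+1).choose (2*(a+b)+1))
      (by
        intro a b hab
        rw [Nat.choose_eq_zero_of_lt (by omega), mul_zero])]
    refine sum_congr rfl fun k hk => ?_
    simp only [mem_range] at hk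
    rw [catalan_succ' k, Nat.sum_antidiagonal_eq_sum_range_succ
      (fun x y => catalan x * catalan y) k, Finset.mul_sum]
    refine sum_congr rfl fun a ha => ?_
    simp only [mem_range] at ha
    have : a + (k - a) = k := by omega
    rw [this]
    ring
  rw [step1, step2]

/-- The large Schroeder numbers (OEIS A006318), defined by `S_0 = 1` and
`S_{n+1} = S_n + ∑_{i=0}^{n} S_i · S_{n-i}`; they begin 1, 2, 6, 22, 90, …. -/
def largeSchroeder : ℕ → ℕ
  | 0 => 1
  | n + 1 =>
    largeSchroeder n + ∑ i : Fin n.succ, largeSchroeder i * largeSchroeder (n - i)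

lemma T_eq (n : ℕ) : T n = largeSchroeder n := by
  induction n using Nat.strong_induction_on with
  | _ n ih =>
    match n with
    | 0 => simp [T, largeSchroeder]
    | Nat.succ m =>
      rw [key m, largeSchroeder]
      rw [Fin.sum_univ_eq_sum_range
        (fun i => largeSchroeder i * largeSchroeder (m - i)) (m+1)]
      rw [ih m (by omega)]
      congr 1
      refine sum_congr rfl fun i hi => ?_
      simp only [mem_range] at hi
      rw [ih i (by omega), ih (m-i) (by omega)]

/-- `∑_{k=0}^n C(2n-k, k)·Catalan(n-k) = ∑_{k=0}^n C(n+k, 2k)·Catalan(k)`, and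
this common value is the `n`-th large Schroeder number `S_n`. -/
theorem schroeder_sum_identity (n : ℕ) :
    (∑ k ∈ Finset.range (n + 1), (2 * n - k).choose k * catalan (n - k)) =
        largeSchroeder n ∧
    (∑ k ∈ Finset.range (n + 1), (n + k).choose (2 * k) * catalan k) =
        largeSchroeder n := by
  have h2 : (∑ k ∈ Finset.range (n + 1), (n + k).choose (2 * k) * catalan k)
      = largeSchroeder n := by
    rw [← T_eq n]; rfl
  have h1 : (∑ k ∈ Finset.range (n+1), (2*n-k).choose k * catalan (n-k))
      = ∑ k ∈ Finset.range (n+1), (n+k).choose (2*k) * catalan k := by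
    rw [← Finset.sum_range_reflect (fun j => (n+j).choose (2*j) * catalan j) (n+1)]
    refine Finset.sum_congr rfl fun k hk => ?_
    simp only [Finset.mem_range] at hk
    have e : n + 1 - 1 - k = n - k := by omega
    rw [e]
    have hsym : (2*n-k).choose k = (n+(n-k)).choose (2*(n-k)) := by
      have h1 : n + (n-k) = 2*n - k := by omega
      rw [h1, ← Nat.choose_symm (show k ≤ 2*n - k by omega)]
      congr 1
      omega
    rw [hsym]
  exact ⟨h1.trans h2, h2⟩
end
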